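/- In the stochastic matching model with stationary distribution π on the sets of unmatched item classes satisfying the recursion π(I)(α(E(I)) − α(I)) = Σ_{i ∈ I} α_i π(I \ {i}) for every nonempty independent set I, Σ_{I} π(I) = 1, and with per-class waiting probabilities ω_i = Σ_{I : i ∉ E(I)} π(I), the average waiting probability satisfies Σ_{i ∈ V} α_i ω_i = 1/2, where Σ_{i ∈ V} α_i = 1. -/

import Mathlib

open Finset

def IsIndep {V : Type*} (G : SimpleGraph V) (I : Finset V) : Prop :=
  ∀ i ∈ I, ∀ j ∈ I, ¬ G.Adj i j

def nbhd {V : Type*} [Fintype V] [DecidableEq V] (G : SimpleGraph V) [DecidableRel G.Adj]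
    (A : Finset V) : Finset V :=
  A.biUnion fun i => G.neighborFinset i

/-!
Summing the recursion over all independent sets `I`, the right-hand side is reindexed by
`J = I \ {i}`: the pairs `(I, i)` with `i ∈ I` correspond to the pairs `(J, i)` with `i` outside
`J ∪ E(J)`. Writing `N = Σ_I π(I) α(E(I))` and `A = Σ_I π(I) α(I)`, this gives
`N - A = 1 - A - N`, so `N = 1/2`. Finally `Σ_i α_i ω_i = Σ_I π(I) (1 - α(E(I))) = 1 - N`.
-/

section

variable {V : Type*} {G : SimpleGraph V}

lemma IsIndep.empty : IsIndep G ∅ := by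
  simp [IsIndep]

lemma IsIndep.mono {I J : Finset V} (hI : IsIndep G I) (h : J ⊆ I) : IsIndep G J :=
  fun i hi j hj => hI i (h hi) j (h hj)

variable [Fintype V]

section
variable [DecidablePred (IsIndep G)]

variable (G) in
def indepSets : Finset (Finset V) :=
  univ.filter (IsIndep G)

@[simp]
lemma mem_indepSets {I : Finset V} : I ∈ indepSets G ↔ IsIndep G I := by
  simp [indepSets]

end

variable [DecidableEq V] [DecidableRel G.Adj]

lemma mem_nbhd {A : Finset V} {i : V} : i ∈ nbhd G A ↔ ∃ j ∈ A, G.Adj j i := by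
  simp [nbhd, SimpleGraph.mem_neighborFinset]

namespace IsIndep

lemma disjoint_nbhd {J : Finset V} (hJ : IsIndep G J) : Disjoint J (nbhd G J) :=
  disjoint_left.2 fun _ hi hin =>
    let ⟨j, hj, hadj⟩ := mem_nbhd.1 hin
    hJ j hj _ hi hadj

lemma insert {J : Finset V} {i : V} (hJ : IsIndep G J) (hi : i ∉ nbhd G J) :
    IsIndep G (insert i J) := by
  intro x hx y hy hadj
  rcases mem_insert.1 hx with hx | hx <;> rcases mem_insert.1 hy with hy | hy
  · exact G.irrefl (hx ▸ hy ▸ hadj)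
  · exact hi (mem_nbhd.2 ⟨y, hy, (hx ▸ hadj).symm⟩)
  · exact hi (mem_nbhd.2 ⟨x, hx, hy ▸ hadj⟩)
  · exact hJ x hx y hy hadj

end IsIndep

lemma sum_compl_union_nbhd {J : Finset V} (hJ : IsIndep G J) (α : V → ℝ) :
    ∑ i ∈ (J ∪ nbhd G J)ᶜ, α i = ∑ i, α i - ∑ i ∈ J, α i - ∑ j ∈ nbhd G J, α j := by
  rw [← sum_compl_add_sum (J ∪ nbhd G J), sum_union hJ.disjoint_nbhd]
  ring

lemma sum_mul_sum_filter_notMem_nbhd (T : Finset (Finset V)) (α : V → ℝ) (π : Finset V → ℝ) :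
    ∑ i, α i * ∑ I ∈ T.filter (fun I => i ∉ nbhd G I), π I
      = ∑ I ∈ T, π I * (∑ i, α i - ∑ j ∈ nbhd G I, α j) := by
  simp_rw [mul_sum, sum_filter]
  rw [sum_comm]
  refine sum_congr rfl fun I _ => ?_
  rw [← sum_filter, filter_not, filter_mem_eq_inter, univ_inter, sum_sdiff_eq_sub (subset_univ _),
    ← sum_mul, ← sum_mul]
  ring

variable [DecidablePred (IsIndep G)]

lemma sum_sum_erase_eq_sum_sum_compl {M : Type*} [AddCommMonoid M] (f : Finset V → V → M) :
    ∑ I ∈ indepSets G, ∑ i ∈ I, f (I.erase i) i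
      = ∑ J ∈ indepSets G, ∑ i ∈ (J ∪ nbhd G J)ᶜ, f J i := by
  rw [sum_sigma', sum_sigma']
  refine sum_nbij' (fun p => ⟨p.1.erase p.2, p.2⟩) (fun p => ⟨insert p.2 p.1, p.2⟩)
    ?_ ?_ ?_ ?_ fun _ _ => rfl
  · rintro ⟨I, i⟩ hp
    simp only [mem_sigma, mem_indepSets, mem_compl, mem_union, not_or] at hp ⊢
    refine ⟨hp.1.mono (erase_subset i I), notMem_erase i I, fun hin => ?_⟩
    obtain ⟨j, hj, hadj⟩ := mem_nbhd.1 hin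
    exact hp.1 j (mem_of_mem_erase hj) i hp.2 hadj
  · rintro ⟨J, i⟩ hp
    simp only [mem_sigma, mem_indepSets, mem_compl, mem_union, not_or] at hp ⊢
    exact ⟨hp.1.insert hp.2.2, mem_insert_self i J⟩
  · rintro ⟨I, i⟩ hp
    simp [insert_erase (mem_sigma.1 hp).2]
  · rintro ⟨J, i⟩ hp
    simp only [mem_sigma, mem_compl, mem_union, not_or] at hp
    simp [erase_insert hp.2.1]

lemma two_mul_sum_mul_sum_nbhd (α : V → ℝ) (π : Finset V → ℝ)
    (hrec : ∀ I : Finset V, I.Nonempty → IsIndep G I →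
      π I * ((∑ j ∈ nbhd G I, α j) - ∑ i ∈ I, α i) = ∑ i ∈ I, α i * π (I.erase i)) :
    2 * ∑ I ∈ indepSets G, π I * ∑ j ∈ nbhd G I, α j
      = (∑ i, α i) * ∑ I ∈ indepSets G, π I := by
  have hsum : ∑ I ∈ indepSets G, π I * ((∑ j ∈ nbhd G I, α j) - ∑ i ∈ I, α i)
      = ∑ I ∈ indepSets G, π I * (∑ i, α i - ∑ i ∈ I, α i - ∑ j ∈ nbhd G I, α j) := by
    calc _ = ∑ I ∈ indepSets G, ∑ i ∈ I, α i * π (I.erase i) := by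
          refine sum_congr rfl fun I hI => ?_
          rcases I.eq_empty_or_nonempty with rfl | hne
          · simp [nbhd]
          · exact hrec I hne (mem_indepSets.1 hI)
      _ = ∑ J ∈ indepSets G, ∑ i ∈ (J ∪ nbhd G J)ᶜ, α i * π J :=
          sum_sum_erase_eq_sum_sum_compl fun J i => α i * π J
      _ = _ := by
          refine sum_congr rfl fun J hJ => ?_
          rw [← sum_mul, sum_compl_union_nbhd (mem_indepSets.1 hJ), mul_comm]
  simp only [mul_sub, sum_sub_distrib, ← sum_mul] at hsum ⊢
  linarith

end

theorem stmt11_general {V : Type*} [Fintype V] [DecidableEq V] (G : SimpleGraph V) [DecidableRel G.Adj]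
    [DecidablePred (IsIndep G)]
    (α : V → ℝ) (hα1 : ∑ i, α i = 1)
    (S : Finset (Finset V))
    (hS : S = (Finset.univ : Finset (Finset V)).filter (fun I => I = ∅ ∨ IsIndep G I))
    (π : Finset V → ℝ)
    (hrec : ∀ I : Finset V, I.Nonempty → IsIndep G I →
      π I * ((∑ j ∈ nbhd G I, α j) - ∑ i ∈ I, α i) = ∑ i ∈ I, α i * π (I.erase i))
    (hnorm : ∑ I ∈ S, π I = 1)
    (ω : V → ℝ)
    (hω : ∀ i, ω i = ∑ I ∈ S.filter (fun I => i ∉ nbhd G I), π I) :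
    ∑ i, α i * ω i = 1 / 2 := by
  have hS' : S = indepSets G := by
    ext I
    simp only [hS, mem_filter, mem_univ, true_and, mem_indepSets, or_iff_right_iff_imp]
    rintro rfl
    exact IsIndep.empty
  subst hS'
  have hN := two_mul_sum_mul_sum_nbhd α π hrec
  rw [hα1, hnorm] at hN
  simp only [hω, sum_mul_sum_filter_notMem_nbhd, hα1, mul_sub, mul_one, sum_sub_distrib, hnorm]
  linarith

/-- The average waiting probability is `1/2`: `Σ_i α_i ω_i = 1/2`, where
`ω_i = Σ_{I : i ∉ E(I)} π(I)` and `π` satisfies the stationary recursion. -/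
theorem stmt11 {V : Type*} [Fintype V] [DecidableEq V] (G : SimpleGraph V) [DecidableRel G.Adj]
    [DecidablePred (IsIndep G)]
    (α : V → ℝ) (hα : ∀ i, 0 < α i) (hα1 : ∑ i, α i = 1)
    (hstab : ∀ I : Finset V, I.Nonempty → IsIndep G I →
      ∑ i ∈ I, α i < ∑ j ∈ nbhd G I, α j)
    (S : Finset (Finset V))
    (hS : S = (Finset.univ : Finset (Finset V)).filter (fun I => I = ∅ ∨ IsIndep G I))
    (π : Finset V → ℝ)
    (hπpos : ∀ I ∈ S, 0 ≤ π I)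
    (hrec : ∀ I : Finset V, I.Nonempty → IsIndep G I →
      π I * ((∑ j ∈ nbhd G I, α j) - ∑ i ∈ I, α i) = ∑ i ∈ I, α i * π (I.erase i))
    (hnorm : ∑ I ∈ S, π I = 1)
    (ω : V → ℝ)
    (hω : ∀ i, ω i = ∑ I ∈ S.filter (fun I => i ∉ nbhd G I), π I) :
    ∑ i, α i * ω i = 1 / 2 :=
  stmt11_general G α hα1 S hS π hrec hnorm ω hω
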